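/- For any λ > 0 and μ > 0, the smoothed Model I objective f_μ attains an absolute (global) minimum on (ℝⁿ)^k, i.e., there exists (x̄¹,…,x̄^k) ∈ (ℝⁿ)^k with f_μ(x̄¹,…,x̄^k) ≤ f_μ(x¹,…,x^k) for all x¹,…,x^k ∈ ℝⁿ. -/

import Mathlib

open scoped RealInnerProductSpace

/-- The support function `σ_F` of a set `F ⊆ ℝⁿ`. -/
noncomputable def suppF {n : ℕ} (F : Set (EuclideanSpace ℝ (Fin n)))
    (x : EuclideanSpace ℝ (Fin n)) : ℝ :=
  sSup ((fun y => ⟪x, y⟫) '' F)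

/-- Minimum of finitely many real numbers indexed by `Fin m`, `m ≥ 1`. -/
noncomputable def fmin {m : ℕ} (hm : 1 ≤ m) (α : Fin m → ℝ) : ℝ :=
  Finset.univ.inf' (Finset.univ_nonempty_iff.mpr ⟨⟨0, hm⟩⟩) α

/-- Maximum of finitely many real numbers indexed by `Fin m`, `m ≥ 1`. -/
noncomputable def fmax {m : ℕ} (hm : 1 ≤ m) (α : Fin m → ℝ) : ℝ :=
  Finset.univ.sup' (Finset.univ_nonempty_iff.mpr ⟨⟨0, hm⟩⟩) α

/-!
`f_μ` is continuous, so it attains its minimum once it is coercive. Let `F ⊆ closedBall 0 R`,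
`closedBall 0 r ⊆ F` with `r > 0`, and `S = ∑ᵢ ∑ₗ σ_F(xˡ - aⁱ)`. Since `2⟨z, y⟩ ≤ ‖z‖² + R² - d(z, F)²`
for `y ∈ F`, the Moreau envelope `(μ/2)(‖v/μ‖² - d(v/μ, F)²)` of `σ_F` is at least
`σ_F(v) - μR²/2`, so the smooth part of `f_μ` is at least `(2 + λ) S` up to a constant. Each
maximum of partial sums of nonnegative terms is at most the full sum; in the `λ`-term the summand
left out is `σ_F(xˡ - aᵗ) ≥ r ‖xˡ - aᵗ‖`, which leaves `f_μ ≥ λ r ∑ₗ ‖xˡ‖ - C`.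
-/

open Finset Filter Metric

section SupportFunction

variable {n : ℕ} {F : Set (EuclideanSpace ℝ (Fin n))}

lemma suppF_bddAbove (hFb : Bornology.IsBounded F) (x : EuclideanSpace ℝ (Fin n)) :
    BddAbove ((fun y => ⟪x, y⟫) '' F) := by
  obtain ⟨R, hR⟩ := isBounded_iff_forall_norm_le.mp hFb
  refine ⟨‖x‖ * R, ?_⟩
  rintro r ⟨y, hy, rfl⟩
  exact (real_inner_le_norm x y).trans (mul_le_mul_of_nonneg_left (hR y hy) (norm_nonneg x))

lemma inner_le_suppF (hFb : Bornology.IsBounded F) {y : EuclideanSpace ℝ (Fin n)} (hy : y ∈ F)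
    (x : EuclideanSpace ℝ (Fin n)) : ⟪x, y⟫ ≤ suppF F x :=
  le_csSup (suppF_bddAbove hFb x) ⟨y, hy, rfl⟩

lemma suppF_le (hF : F.Nonempty) {x : EuclideanSpace ℝ (Fin n)} {B : ℝ}
    (h : ∀ y ∈ F, ⟪x, y⟫ ≤ B) : suppF F x ≤ B :=
  csSup_le (hF.image _) <| by
    rintro r ⟨y, hy, rfl⟩
    exact h y hy

open scoped Pointwise in
lemma suppF_smul {c : ℝ} (hc : 0 ≤ c) (x : EuclideanSpace ℝ (Fin n)) :
    suppF F (c • x) = c * suppF F x := by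
  have : (fun y => ⟪c • x, y⟫) '' F = c • ((fun y => ⟪x, y⟫) '' F) := by
    rw [← Set.image_smul, Set.image_image]
    simp only [real_inner_smul_left, smul_eq_mul]
  rw [suppF, this, Real.sSup_smul_of_nonneg hc, smul_eq_mul, suppF]

lemma suppF_nonneg (hFb : Bornology.IsBounded F) (h0 : 0 ∈ F) (x : EuclideanSpace ℝ (Fin n)) :
    0 ≤ suppF F x := by
  simpa using inner_le_suppF hFb h0 x

lemma mul_norm_le_suppF (hFb : Bornology.IsBounded F) {r : ℝ} (hr : 0 ≤ r)
    (hball : closedBall 0 r ⊆ F) (x : EuclideanSpace ℝ (Fin n)) :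
    r * ‖x‖ ≤ suppF F x := by
  rcases eq_or_ne x 0 with rfl | hx
  · simpa using suppF_nonneg hFb (hball (mem_closedBall_self hr)) 0
  have hx' : 0 < ‖x‖ := norm_pos_iff.mpr hx
  have hmem : (r / ‖x‖) • x ∈ F := hball <| by
    rw [mem_closedBall, dist_zero_right, norm_smul, Real.norm_of_nonneg (by positivity),
      div_mul_cancel₀ _ hx'.ne']
  calc r * ‖x‖ = ⟪x, (r / ‖x‖) • x⟫ := by
        rw [real_inner_smul_right, real_inner_self_eq_norm_sq]; field_simp
    _ ≤ suppF F x := inner_le_suppF hFb hmem x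

lemma suppF_le_add (hF : F.Nonempty) {R : ℝ} (hR : ∀ y ∈ F, ‖y‖ ≤ R)
    (x x' : EuclideanSpace ℝ (Fin n)) : suppF F x ≤ suppF F x' + R * ‖x - x'‖ := by
  have hFb : Bornology.IsBounded F := isBounded_iff_forall_norm_le.mpr ⟨R, hR⟩
  refine suppF_le hF fun y hy => ?_
  calc ⟪x, y⟫ = ⟪x', y⟫ + ⟪x - x', y⟫ := by rw [← inner_add_left, add_sub_cancel]
    _ ≤ suppF F x' + ‖x - x'‖ * ‖y‖ :=
        add_le_add (inner_le_suppF hFb hy x') (real_inner_le_norm _ _)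
    _ ≤ suppF F x' + R * ‖x - x'‖ := by
        rw [mul_comm]; gcongr; exact hR y hy

lemma continuous_suppF (hF : F.Nonempty) (hFb : Bornology.IsBounded F) :
    Continuous (suppF F) := by
  obtain ⟨R, hR⟩ := isBounded_iff_forall_norm_le.mp hFb
  refine (LipschitzWith.of_le_add_mul' R fun x x' => ?_).continuous
  rw [dist_eq_norm]
  exact suppF_le_add hF hR x x'

lemma suppF_le_half_norm_sq_sub_infDist_sq (hF : F.Nonempty) {R : ℝ} (hR : ∀ y ∈ F, ‖y‖ ≤ R)
    (z : EuclideanSpace ℝ (Fin n)) :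
    suppF F z ≤ (‖z‖ ^ 2 - infDist z F ^ 2 + R ^ 2) / 2 := by
  refine suppF_le hF fun y hy => ?_
  have hd : infDist z F ^ 2 ≤ ‖z - y‖ ^ 2 := by
    gcongr
    · exact infDist_nonneg
    · rw [← dist_eq_norm]; exact infDist_le_dist_of_mem hy
  have hy2 : ‖y‖ ^ 2 ≤ R ^ 2 := pow_le_pow_left₀ (norm_nonneg _) (hR y hy) 2
  rw [norm_sub_sq_real] at hd
  linarith

lemma suppF_le_moreau_add (hF : F.Nonempty) {R : ℝ} (hR : ∀ y ∈ F, ‖y‖ ≤ R) {μ : ℝ}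
    (hμ : 0 < μ) (v : EuclideanSpace ℝ (Fin n)) :
    suppF F v ≤ μ / 2 * (‖μ⁻¹ • v‖ ^ 2 - infDist (μ⁻¹ • v) F ^ 2) + μ * R ^ 2 / 2 := by
  have hv : suppF F v = μ * suppF F (μ⁻¹ • v) := by
    rw [suppF_smul (inv_nonneg.mpr hμ.le), mul_inv_cancel_left₀ hμ.ne']
  have := mul_le_mul_of_nonneg_left (suppF_le_half_norm_sq_sub_infDist_sq hF hR (μ⁻¹ • v)) hμ.le
  linarith

end SupportFunction

lemma fmax_le {m : ℕ} (hm : 1 ≤ m) {α : Fin m → ℝ} {B : ℝ} (h : ∀ t, α t ≤ B) :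
    fmax hm α ≤ B :=
  sup'_le _ _ fun t _ => h t

lemma fmax_sum_erase_le {m : ℕ} (hm : 1 ≤ m) {w : Fin m → ℝ} {B : ℝ} (hB : ∀ t, B ≤ w t) :
    fmax hm (fun t => ∑ j ∈ univ.erase t, w j) ≤ ∑ j, w j - B :=
  fmax_le hm fun t => by
    rw [← sum_erase_add univ w (mem_univ t)]
    linarith [hB t]

@[fun_prop]
lemma Continuous.fmax {X : Type*} [TopologicalSpace X] {m : ℕ} (hm : 1 ≤ m)
    {α : Fin m → X → ℝ} (h : ∀ t, Continuous (α t)) :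
    Continuous fun x => fmax hm (fun t => α t x) :=
  Continuous.finset_sup'_apply _ fun t _ => h t

section ModelI

variable {n m k : ℕ} (hm : 1 ≤ m) (hk : 1 ≤ k) (a : Fin m → EuclideanSpace ℝ (Fin n))
  (F : Set (EuclideanSpace ℝ (Fin n))) (lam μ : ℝ)

noncomputable def modelIObjective (X : Fin k → EuclideanSpace ℝ (Fin n)) : ℝ :=
  ((2 + lam) * μ / 2) * ∑ i, ∑ ℓ, ‖μ⁻¹ • (X ℓ - a i)‖ ^ 2
    - ((2 + lam) * μ / 2) * ∑ i, ∑ ℓ, (infDist (μ⁻¹ • (X ℓ - a i)) F) ^ 2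
    - ∑ i, fmax hk (fun t => ∑ ℓ ∈ univ.erase t, suppF F (X ℓ - a i))
    - lam * ∑ ℓ, fmax hm (fun t => ∑ i ∈ univ.erase t, suppF F (X ℓ - a i))
    - fmax hm (fun t => ∑ i ∈ univ.erase t, ∑ ℓ, suppF F (X ℓ - a i))

variable {F lam μ}

lemma continuous_modelIObjective (hF : F.Nonempty) (hFb : Bornology.IsBounded F) :
    Continuous (modelIObjective hm hk a F lam μ) := by
  have := continuous_suppF hF hFb
  unfold modelIObjective
  fun_prop

lemma le_modelIObjective {R r : ℝ} (hR : ∀ y ∈ F, ‖y‖ ≤ R) (hr : 0 ≤ r)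
    (hball : closedBall 0 r ⊆ F) (hlam : 0 ≤ lam) (hμ : 0 < μ)
    (X : Fin k → EuclideanSpace ℝ (Fin n)) :
    lam * r * ∑ ℓ, ‖X ℓ‖ - ((2 + lam) * (m * k * (μ * R ^ 2 / 2)) + lam * (k * (r * ‖a‖))) ≤
      modelIObjective hm hk a F lam μ X := by
  have hFb : Bornology.IsBounded F := isBounded_iff_forall_norm_le.mpr ⟨R, hR⟩
  have h0 : 0 ∈ F := hball (mem_closedBall_self hr)
  have hσ0 := suppF_nonneg hFb h0
  set S := ∑ i, ∑ ℓ, suppF F (X ℓ - a i)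
  have hsmooth : S ≤ μ / 2 * (∑ i, ∑ ℓ, ‖μ⁻¹ • (X ℓ - a i)‖ ^ 2
      - ∑ i, ∑ ℓ, infDist (μ⁻¹ • (X ℓ - a i)) F ^ 2) + m * k * (μ * R ^ 2 / 2) := by
    have := sum_le_sum fun i (_ : i ∈ univ) => sum_le_sum fun ℓ (_ : ℓ ∈ univ) =>
      suppF_le_moreau_add ⟨0, h0⟩ hR hμ (X ℓ - a i)
    simpa only [sum_add_distrib, sum_const, card_univ, Fintype.card_fin, nsmul_eq_mul,
      ← mul_sum, mul_sub, sum_sub_distrib, mul_assoc] using this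
  have hnodes : ∑ i, fmax hk (fun t => ∑ ℓ ∈ univ.erase t, suppF F (X ℓ - a i)) ≤ S :=
    sum_le_sum fun i _ => by simpa using fmax_sum_erase_le hk fun ℓ => hσ0 (X ℓ - a i)
  have hcenters : ∑ ℓ, fmax hm (fun t => ∑ i ∈ univ.erase t, suppF F (X ℓ - a i)) ≤
      S - r * ∑ ℓ, ‖X ℓ‖ + k * (r * ‖a‖) := by
    have hfar : ∀ ℓ t, r * ‖X ℓ‖ - r * ‖a‖ ≤ suppF F (X ℓ - a t) := fun ℓ t =>
      calc r * ‖X ℓ‖ - r * ‖a‖ ≤ r * ‖X ℓ - a t‖ := by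
            rw [← mul_sub]
            gcongr
            linarith [norm_sub_norm_le (X ℓ) (a t), norm_le_pi_norm a t]
        _ ≤ suppF F (X ℓ - a t) := mul_norm_le_suppF hFb hr hball _
    calc _ ≤ ∑ ℓ, (∑ i, suppF F (X ℓ - a i) - (r * ‖X ℓ‖ - r * ‖a‖)) :=
          sum_le_sum fun ℓ _ => fmax_sum_erase_le hm (hfar ℓ)
      _ = S - r * ∑ ℓ, ‖X ℓ‖ + k * (r * ‖a‖) := by
          simp only [sum_sub_distrib, ← mul_sum, sum_const, card_univ, Fintype.card_fin,
            nsmul_eq_mul, S, sum_comm (γ := Fin k)]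
          ring
  have htotal : fmax hm (fun t => ∑ i ∈ univ.erase t, ∑ ℓ, suppF F (X ℓ - a i)) ≤ S := by
    simpa using fmax_sum_erase_le hm fun i => sum_nonneg fun ℓ _ => hσ0 (X ℓ - a i)
  have := mul_le_mul_of_nonneg_left hcenters hlam
  have := mul_le_mul_of_nonneg_left hsmooth (by linarith : (0 : ℝ) ≤ 2 + lam)
  unfold modelIObjective
  linarith

lemma tendsto_modelIObjective_cocompact (hFb : Bornology.IsBounded F) (hF0 : 0 ∈ interior F)
    (hlam : 0 < lam) (hμ : 0 < μ) :
    Tendsto (modelIObjective hm hk a F lam μ) (cocompact _) atTop := by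
  obtain ⟨R, hR⟩ := isBounded_iff_forall_norm_le.mp hFb
  obtain ⟨r, hr, hball⟩ := nhds_basis_closedBall.mem_iff.mp (mem_interior_iff_mem_nhds.mp hF0)
  obtain ⟨C, hC⟩ : ∃ C, ∀ X, lam * r * ∑ ℓ, ‖X ℓ‖ - C ≤ modelIObjective hm hk a F lam μ X :=
    ⟨_, le_modelIObjective hm hk a hR hr.le hball hlam.le hμ⟩
  have hlow : ∀ X, lam * r * ‖X‖ + -C ≤ modelIObjective hm hk a F lam μ X := fun X => by
    have hX : ‖X‖ ≤ ∑ ℓ, ‖X ℓ‖ := (pi_norm_le_iff_of_nonneg (by positivity)).mpr fun ℓ =>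
      single_le_sum (f := fun j => ‖X j‖) (fun j _ => norm_nonneg _) (mem_univ ℓ)
    linarith [hC X, mul_le_mul_of_nonneg_left hX (by positivity : 0 ≤ lam * r)]
  refine tendsto_atTop_mono hlow (tendsto_atTop_add_const_right _ _ ?_)
  exact tendsto_norm_cocompact_atTop.const_mul_atTop (by positivity)

end ModelI

theorem stmt_11_general {n m k : ℕ} (hm : 1 ≤ m) (hk : 1 ≤ k)
    (a : Fin m → EuclideanSpace ℝ (Fin n))
    (F : Set (EuclideanSpace ℝ (Fin n)))
    (hFb : Bornology.IsBounded F)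
    (hF0 : (0 : EuclideanSpace ℝ (Fin n)) ∈ interior F)
    (lam μ : ℝ) (hlam : 0 < lam) (hμ : 0 < μ) :
    ∃ Xbar : Fin k → EuclideanSpace ℝ (Fin n),
      ∀ X : Fin k → EuclideanSpace ℝ (Fin n),
        (((2 + lam) * μ / 2) * ∑ i, ∑ ℓ, ‖μ⁻¹ • (Xbar ℓ - a i)‖ ^ 2
            - ((2 + lam) * μ / 2) * ∑ i, ∑ ℓ, (Metric.infDist (μ⁻¹ • (Xbar ℓ - a i)) F) ^ 2
            - ∑ i, fmax hk (fun t => ∑ ℓ ∈ Finset.univ.erase t, suppF F (Xbar ℓ - a i))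
            - lam * ∑ ℓ, fmax hm (fun t => ∑ i ∈ Finset.univ.erase t, suppF F (Xbar ℓ - a i))
            - fmax hm (fun t => ∑ i ∈ Finset.univ.erase t, ∑ ℓ, suppF F (Xbar ℓ - a i)))
          ≤ (((2 + lam) * μ / 2) * ∑ i, ∑ ℓ, ‖μ⁻¹ • (X ℓ - a i)‖ ^ 2
            - ((2 + lam) * μ / 2) * ∑ i, ∑ ℓ, (Metric.infDist (μ⁻¹ • (X ℓ - a i)) F) ^ 2
            - ∑ i, fmax hk (fun t => ∑ ℓ ∈ Finset.univ.erase t, suppF F (X ℓ - a i))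
            - lam * ∑ ℓ, fmax hm (fun t => ∑ i ∈ Finset.univ.erase t, suppF F (X ℓ - a i))
            - fmax hm (fun t => ∑ i ∈ Finset.univ.erase t, ∑ ℓ, suppF F (X ℓ - a i))) := by
  exact (continuous_modelIObjective hm hk a ⟨0, interior_subset hF0⟩ hFb).exists_forall_le
    (tendsto_modelIObjective_cocompact hm hk a hFb hF0 hlam hμ)

theorem stmt_11 {n m k : ℕ} (hm : 1 ≤ m) (hk : 1 ≤ k)
    (a : Fin m → EuclideanSpace ℝ (Fin n))
    (F : Set (EuclideanSpace ℝ (Fin n)))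
    (hF : F.Nonempty) (hFc : IsClosed F) (hFb : Bornology.IsBounded F)
    (hFconv : Convex ℝ F) (hF0 : (0 : EuclideanSpace ℝ (Fin n)) ∈ interior F)
    (lam μ : ℝ) (hlam : 0 < lam) (hμ : 0 < μ) :
    ∃ Xbar : Fin k → EuclideanSpace ℝ (Fin n),
      ∀ X : Fin k → EuclideanSpace ℝ (Fin n),
        (((2 + lam) * μ / 2) * ∑ i, ∑ ℓ, ‖μ⁻¹ • (Xbar ℓ - a i)‖ ^ 2
            - ((2 + lam) * μ / 2) * ∑ i, ∑ ℓ, (Metric.infDist (μ⁻¹ • (Xbar ℓ - a i)) F) ^ 2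
            - ∑ i, fmax hk (fun t => ∑ ℓ ∈ Finset.univ.erase t, suppF F (Xbar ℓ - a i))
            - lam * ∑ ℓ, fmax hm (fun t => ∑ i ∈ Finset.univ.erase t, suppF F (Xbar ℓ - a i))
            - fmax hm (fun t => ∑ i ∈ Finset.univ.erase t, ∑ ℓ, suppF F (Xbar ℓ - a i)))
          ≤ (((2 + lam) * μ / 2) * ∑ i, ∑ ℓ, ‖μ⁻¹ • (X ℓ - a i)‖ ^ 2
            - ((2 + lam) * μ / 2) * ∑ i, ∑ ℓ, (Metric.infDist (μ⁻¹ • (X ℓ - a i)) F) ^ 2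
            - ∑ i, fmax hk (fun t => ∑ ℓ ∈ Finset.univ.erase t, suppF F (X ℓ - a i))
            - lam * ∑ ℓ, fmax hm (fun t => ∑ i ∈ Finset.univ.erase t, suppF F (X ℓ - a i))
            - fmax hm (fun t => ∑ i ∈ Finset.univ.erase t, ∑ ℓ, suppF F (X ℓ - a i))) :=
  stmt_11_general hm hk a F hFb hF0 lam μ hlam hμ
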